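/- arXiv:math/0503696 — 2 statements merged into one kernel-verified Lean document; each statement's English description precedes it below -/
import Mathlib

section
/- For every complex symmetric 3×3 matrix τ whose imaginary part is positive definite and every δ', δ'' ∈ ℝ³, the function z ↦ θ[δ](z; τ) is holomorphic (complex differentiable) on all of ℂ³. -/
open Matrix

/-- The Riemann theta function with characteristic `δ = (δ', δ'')` in genus 3:
`θ[δ](z; τ) = Σ_{n ∈ ℤ³} exp(2πi(½·ᵗ(n+δ')τ(n+δ') + ᵗ(n+δ')(z+δ'')))`. -/
noncomputable def thetaChar (τ : Matrix (Fin 3) (Fin 3) ℂ) (δ' δ'' : Fin 3 → ℝ)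
    (z : Fin 3 → ℂ) : ℂ :=
  ∑' n : Fin 3 → ℤ,
    Complex.exp (2 * (Real.pi : ℂ) * Complex.I *
      ((1 / 2) * ((fun i => (n i : ℂ) + (δ' i : ℂ)) ⬝ᵥ τ *ᵥ (fun i => (n i : ℂ) + (δ' i : ℂ))) +
        (fun i => (n i : ℂ) + (δ' i : ℂ)) ⬝ᵥ (fun i => z i + (δ'' i : ℂ))))

/-!
Writing `w = n + δ'`, the theta series is `Σₙ aₙ exp(ℓₙ z)` with `ℓₙ z = 2πi ᵗw z` and
`|aₙ| = exp(-π ᵗw (Im τ) w)`. Since `Im τ` is positive definite, `ᵗw (Im τ) w ≥ c |w|²` for some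
`c > 0`, so the Gaussian decay of `aₙ` beats `exp(R ‖ℓₙ‖)` for every `R`; the lattice sum then
factors into one-dimensional Gaussian sums. This bounds the termwise derivatives uniformly on every
ball, and the series may be differentiated term by term.
-/

theorem summable_prod_apply_of_nonneg {ι : Type*} [Fintype ι] {κ : ι → Type*}
    {f : ∀ i, κ i → ℝ} (hf : ∀ i, Summable (f i)) (hf₀ : ∀ i m, 0 ≤ f i m) :
    Summable fun n : (∀ i, κ i) => ∏ i, f i (n i) := by
  classical
  refine summable_of_sum_le (c := ∏ i, ∑' m, f i m)
    (fun n => Finset.prod_nonneg fun i _ => hf₀ i (n i)) fun s => ?_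
  calc ∑ n ∈ s, ∏ i, f i (n i)
      ≤ ∑ n ∈ Fintype.piFinset fun i => s.image (· i), ∏ i, f i (n i) :=
        Finset.sum_le_sum_of_subset_of_nonneg
          (fun n hn => Fintype.mem_piFinset.2 fun i => Finset.mem_image_of_mem _ hn)
          (fun n _ _ => Finset.prod_nonneg fun i _ => hf₀ i (n i))
    _ = ∏ i, ∑ m ∈ s.image (· i), f i m := (Finset.prod_univ_sum _ _).symm
    _ ≤ ∏ i, ∑' m, f i m :=
        Finset.prod_le_prod (fun i _ => Finset.sum_nonneg fun m _ => hf₀ i m)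
          fun i _ => (hf i).sum_le_tsum _ fun m _ => hf₀ i m

theorem summable_exp_neg_mul_sq_add_mul_abs {a : ℝ} (ha : 0 < a) (b d : ℝ) :
    Summable fun m : ℤ => Real.exp (-a * (m + d) ^ 2 + b * |m + d|) := by
  refine ((HurwitzKernelBounds.summable_f_int 0 d (t := a / (2 * Real.pi)) (by positivity)).mul_left
    (Real.exp (b ^ 2 / (2 * a)))).of_nonneg_of_le (fun m => (Real.exp_pos _).le) fun m => ?_
  -- completing the square: `-a x² + b |x| ≤ -a x² / 2 + b² / (2a)`
  have hsq : b * |(m : ℝ) + d| - a / 2 * |(m : ℝ) + d| ^ 2 ≤ b ^ 2 / (2 * a) := by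
    rw [le_div_iff₀ (by positivity)]
    nlinarith [sq_nonneg (a * |(m : ℝ) + d| - b)]
  simp only [HurwitzKernelBounds.f_int, pow_zero, one_mul, ← Real.exp_add, Real.exp_le_exp]
  rw [← sq_abs ((m : ℝ) + d)]
  have hpi : Real.pi * (a / (2 * Real.pi)) = a / 2 := by field_simp
  linear_combination hsq + |(m : ℝ) + d| ^ 2 * hpi

theorem Matrix.PosDef.exists_pos_mul_dotProduct_self_le {ι : Type*} [Fintype ι]
    {A : Matrix ι ι ℝ} (hA : A.PosDef) :
    ∃ c > 0, ∀ v : ι → ℝ, c * (v ⬝ᵥ v) ≤ v ⬝ᵥ A *ᵥ v := by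
  have hself : ∀ v : ι → ℝ, v ≠ 0 → 0 < v ⬝ᵥ v := fun v hv => by
    simpa using dotProduct_self_star_pos_iff.2 hv
  set rayleigh : (ι → ℝ) → ℝ := fun v => (v ⬝ᵥ A *ᵥ v) / (v ⬝ᵥ v)
  have hscale : ∀ (t : ℝ) v, t ≠ 0 → rayleigh (t • v) = rayleigh v := fun t v ht => by
    simp only [rayleigh, smul_dotProduct, mulVec_smul, dotProduct_smul, smul_eq_mul, ← mul_assoc]
    exact mul_div_mul_left _ _ (mul_ne_zero ht ht)
  have hcont : ContinuousOn rayleigh (Metric.sphere 0 1) :=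
    ContinuousOn.div (by simp only [dotProduct, mulVec]; fun_prop)
      (by simp only [dotProduct]; fun_prop)
      fun v hv => (hself v (ne_zero_of_mem_unit_sphere ⟨v, hv⟩)).ne'
  obtain ⟨c, hc, hle⟩ := (isCompact_sphere (0 : ι → ℝ) 1).exists_forall_le' hcont (a := 0)
    fun v hv => have hv := ne_zero_of_mem_unit_sphere ⟨v, hv⟩
      div_pos (hA.dotProduct_mulVec_pos hv) (hself v hv)
  refine ⟨c, hc, fun v => ?_⟩
  rcases eq_or_ne v 0 with rfl | hv
  · simp
  have hnorm : ‖v‖⁻¹ ≠ 0 := inv_ne_zero (norm_ne_zero_iff.2 hv)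
  have := hle (‖v‖⁻¹ • v) (by simp [norm_smul, hv])
  rwa [hscale _ _ hnorm, le_div_iff₀ (hself v hv)] at this

theorem Matrix.PosDef.summable_exp_neg_dotProduct_mulVec_add_mul_sum_abs {ι : Type*}
    [Fintype ι] {A : Matrix ι ι ℝ} (hA : A.PosDef) (δ : ι → ℝ) (b : ℝ) :
    Summable fun n : ι → ℤ => Real.exp (-((fun i => n i + δ i) ⬝ᵥ A *ᵥ fun i => n i + δ i) +
      b * ∑ i, |(n i : ℝ) + δ i|) := by
  obtain ⟨c, hc, hle⟩ := hA.exists_pos_mul_dotProduct_self_le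
  refine (summable_prod_apply_of_nonneg (fun i => summable_exp_neg_mul_sq_add_mul_abs hc b (δ i))
    fun _ _ => (Real.exp_pos _).le).of_nonneg_of_le (fun _ => (Real.exp_pos _).le) fun n => ?_
  have := hle fun i => n i + δ i
  rw [← Real.exp_sum, Real.exp_le_exp, Finset.sum_add_distrib, Finset.mul_sum]
  simp only [dotProduct, Finset.mul_sum, sq, neg_mul, Finset.sum_neg_distrib] at this ⊢
  linarith

theorem differentiable_tsum_mul_cexp {α E : Type*} [NormedAddCommGroup E] [NormedSpace ℂ E]
    {a : α → ℂ} {ℓ : α → E →L[ℂ] ℂ}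
    (h : ∀ R : ℝ, 0 ≤ R → Summable fun n => ‖a n‖ * Real.exp (R * ‖ℓ n‖)) :
    Differentiable ℂ fun z => ∑' n, a n * Complex.exp (ℓ n z) := by
  have hnorm : ∀ n z, ‖a n * Complex.exp (ℓ n z)‖ ≤ ‖a n‖ * Real.exp (‖z‖ * ‖ℓ n‖) :=
    fun n z => by
      rw [norm_mul]
      gcongr
      refine (Complex.norm_exp_le_exp_norm _).trans (Real.exp_le_exp.2 ?_)
      rw [mul_comm]
      exact (ℓ n).le_opNorm z
  intro z₀
  -- the factor `‖ℓ n‖` of the derivative is absorbed by `‖ℓ n‖ ≤ exp ‖ℓ n‖`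
  have hderiv_le : ∀ n, ∀ z ∈ Metric.ball z₀ 1,
      ‖(a n * Complex.exp (ℓ n z)) • ℓ n‖ ≤ ‖a n‖ * Real.exp ((‖z₀‖ + 2) * ‖ℓ n‖) := by
    intro n z hz
    have hz : ‖z‖ ≤ ‖z₀‖ + 1 := by
      have := norm_le_norm_add_norm_sub' z z₀
      rw [mem_ball_iff_norm] at hz
      linarith
    calc ‖(a n * Complex.exp (ℓ n z)) • ℓ n‖
        ≤ ‖a n‖ * Real.exp ((‖z₀‖ + 1) * ‖ℓ n‖) * Real.exp ‖ℓ n‖ := by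
          rw [norm_smul]
          gcongr
          · exact (hnorm n z).trans (by gcongr)
          · exact (Real.add_one_le_exp _).trans' (by linarith)
      _ = ‖a n‖ * Real.exp ((‖z₀‖ + 2) * ‖ℓ n‖) := by
          rw [mul_assoc, ← Real.exp_add]
          ring_nf
  refine (hasFDerivAt_tsum_of_isPreconnected (h _ (by positivity)) Metric.isOpen_ball
    (convex_ball z₀ 1).isPreconnected (fun n z _ => ?_) hderiv_le (Metric.mem_ball_self one_pos)
    ?_ (Metric.mem_ball_self one_pos)).differentiableAt
  · simpa only [smul_smul] using (ℓ n).hasFDerivAt.cexp.const_mul (a n)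
  · exact (h _ (norm_nonneg z₀)).of_norm_bounded (hnorm · z₀)

section ThetaSeries

open Complex
open scoped Real

variable {ι : Type*} [Fintype ι]

noncomputable def thetaCoeff (τ : Matrix ι ι ℂ) (δ' δ'' : ι → ℝ) (n : ι → ℤ) : ℂ :=
  exp (2 * π * I * ((1 / 2) * ((fun i => (n i : ℂ) + δ' i) ⬝ᵥ τ *ᵥ fun i => (n i : ℂ) + δ' i) +
    (fun i => (n i : ℂ) + δ' i) ⬝ᵥ fun i => (δ'' i : ℂ)))

noncomputable def thetaFrequency (δ' : ι → ℝ) (n : ι → ℤ) : (ι → ℂ) →L[ℂ] ℂ :=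
  (2 * π * I) • ∑ i, ((n i : ℂ) + δ' i) • ContinuousLinearMap.proj i

theorem thetaFrequency_apply (δ' : ι → ℝ) (n : ι → ℤ) (z : ι → ℂ) :
    thetaFrequency δ' n z = 2 * π * I * ((fun i => (n i : ℂ) + δ' i) ⬝ᵥ z) := by
  simp [thetaFrequency, dotProduct, Finset.mul_sum]

theorem norm_thetaFrequency_le (δ' : ι → ℝ) (n : ι → ℤ) :
    ‖thetaFrequency δ' n‖ ≤ 2 * π * ∑ i, |(n i : ℝ) + δ' i| := by
  refine ContinuousLinearMap.opNorm_le_bound _ (by positivity) fun z => ?_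
  rw [thetaFrequency_apply, norm_mul, mul_assoc (2 * π)]
  gcongr
  · simp [abs_of_pos Real.pi_pos]
  · calc ‖(fun i => (n i : ℂ) + δ' i) ⬝ᵥ z‖ ≤ ∑ i, ‖((n i : ℂ) + δ' i) * z i‖ := norm_sum_le _ _
      _ ≤ ∑ i, |(n i : ℝ) + δ' i| * ‖z‖ := by
        gcongr with i
        rw [norm_mul]
        gcongr
        · exact_mod_cast (norm_real ((n i : ℝ) + δ' i)).le
        · exact norm_le_pi_norm z i
      _ = _ := (Finset.sum_mul ..).symm

theorem im_ofReal_dotProduct_mulVec_ofReal (τ : Matrix ι ι ℂ) (v : ι → ℝ) :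
    ((fun i => (v i : ℂ)) ⬝ᵥ τ *ᵥ fun i => (v i : ℂ)).im = v ⬝ᵥ τ.map im *ᵥ v := by
  simp [dotProduct, mulVec, im_sum, Finset.mul_sum, mul_comm]

theorem norm_thetaCoeff (τ : Matrix ι ι ℂ) (δ' δ'' : ι → ℝ) (n : ι → ℤ) :
    ‖thetaCoeff τ δ' δ'' n‖ = Real.exp (-(π *
      ((fun i => (n i : ℝ) + δ' i) ⬝ᵥ τ.map im *ᵥ fun i => (n i : ℝ) + δ' i))) := by
  have hw : (fun i => (n i : ℂ) + δ' i) = fun i => (((n i : ℝ) + δ' i : ℝ) : ℂ) := by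
    push_cast; rfl
  have hreal : ((fun i => (((n i : ℝ) + δ' i : ℝ) : ℂ)) ⬝ᵥ fun i => (δ'' i : ℂ)).im = 0 := by
    simp [dotProduct, im_sum]
  have hre : ∀ u : ℂ, (2 * π * I * u).re = -(2 * π * u.im) := fun u => by simp [mul_re, mul_im]
  rw [thetaCoeff, norm_exp, hw, hre, add_im, hreal, add_zero, mul_im,
    im_ofReal_dotProduct_mulVec_ofReal]
  norm_num
  ring

theorem summable_norm_thetaCoeff_mul_exp {τ : Matrix ι ι ℂ} (hτ : (τ.map im).PosDef)
    (δ' δ'' : ι → ℝ) (R : ℝ) (hR : 0 ≤ R) :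
    Summable fun n => ‖thetaCoeff τ δ' δ'' n‖ * Real.exp (R * ‖thetaFrequency δ' n‖) := by
  refine ((hτ.smul Real.pi_pos).summable_exp_neg_dotProduct_mulVec_add_mul_sum_abs δ'
    (R * (2 * π))).of_nonneg_of_le (fun n => by positivity) fun n => ?_
  rw [norm_thetaCoeff, smul_mulVec, dotProduct_smul, smul_eq_mul, mul_assoc, ← Real.exp_add]
  gcongr
  exact norm_thetaFrequency_le δ' n

end ThetaSeries

theorem thetaChar_eq_tsum (τ : Matrix (Fin 3) (Fin 3) ℂ) (δ' δ'' : Fin 3 → ℝ) :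
    thetaChar τ δ' δ'' =
      fun z => ∑' n, thetaCoeff τ δ' δ'' n * Complex.exp (thetaFrequency δ' n z) := by
  ext z
  refine tsum_congr fun n => ?_
  rw [thetaCoeff, thetaFrequency_apply, ← Complex.exp_add,
    show (fun i => z i + (δ'' i : ℂ)) = z + fun i => (δ'' i : ℂ) from rfl, dotProduct_add]
  ring_nf

theorem thetaChar_differentiable_general (τ : Matrix (Fin 3) (Fin 3) ℂ)
    (hpos : (τ.map Complex.im).PosDef) (δ' δ'' : Fin 3 → ℝ) :
    Differentiable ℂ (thetaChar τ δ' δ'') := by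
  rw [thetaChar_eq_tsum]
  exact differentiable_tsum_mul_cexp (summable_norm_thetaCoeff_mul_exp hpos δ' δ'')

/-- For every complex symmetric 3×3 matrix `τ` whose imaginary part is positive definite and
every `δ', δ'' ∈ ℝ³`, the function `z ↦ θ[δ](z; τ)` is holomorphic (complex differentiable)
on all of `ℂ³`. -/
theorem thetaChar_differentiable (τ : Matrix (Fin 3) (Fin 3) ℂ) (hsymm : τ.IsSymm)
    (hpos : (τ.map Complex.im).PosDef) (δ' δ'' : Fin 3 → ℝ) :
    Differentiable ℂ (thetaChar τ δ' δ'') :=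
  thetaChar_differentiable_general τ hpos δ' δ''
end

section
/- Let ω', ω'', η', η'' be complex 3×3 matrices with ω' invertible, and suppose that the 6×6 block matrix M = [[ω', ω''],[η', η'']] satisfies the generalized Legendre relation M·J·ᵗM = 2πi·J, where J is the 6×6 block matrix [[0, −1₃],[1₃, 0]] and 1₃ is the 3×3 identity matrix. Then the matrix ω'⁻¹ω'' is symmetric. -/
open Matrix

/-- If the 6×6 block matrix `M = [[ω', ω''],[η', η'']]` (with `ω'` invertible) satisfies the
generalized Legendre relation `M·J·ᵗM = 2πi·J`, where `J = [[0, −1₃],[1₃, 0]]`, then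
`ω'⁻¹ω''` is a symmetric matrix. -/
theorem legendre_relation_symm (ω' ω'' η' η'' : Matrix (Fin 3) (Fin 3) ℂ)
    (hω' : IsUnit ω')
    (hLeg : Matrix.fromBlocks ω' ω'' η' η'' *
          Matrix.fromBlocks (0 : Matrix (Fin 3) (Fin 3) ℂ) (-1) 1 0 *
          (Matrix.fromBlocks ω' ω'' η' η'')ᵀ =
        (2 * (Real.pi : ℂ) * Complex.I) •
          Matrix.fromBlocks (0 : Matrix (Fin 3) (Fin 3) ℂ) (-1) 1 0) :
    (ω'⁻¹ * ω'').IsSymm := by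
  have h11 := congrArg Matrix.toBlocks₁₁ hLeg
  simp only [Matrix.fromBlocks_multiply, Matrix.fromBlocks_transpose,
    Matrix.fromBlocks_smul, Matrix.toBlocks_fromBlocks₁₁, Matrix.mul_zero, Matrix.zero_mul,
    Matrix.mul_one, Matrix.one_mul, Matrix.mul_neg, Matrix.neg_mul, add_zero, zero_add,
    smul_zero] at h11
  have key : ω'' * ω'ᵀ = ω' * ω''ᵀ := by
    rw [← sub_eq_zero]
    rw [sub_eq_add_neg]
    simpa using h11
  have hdet : IsUnit ω'.det := (Matrix.isUnit_iff_isUnit_det ω').mp hω'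
  have hinv' : ω'⁻¹ * ω' = 1 := Matrix.nonsing_inv_mul _ hdet
  have hTinv : ω'ᵀ * (ω'⁻¹)ᵀ = 1 := by
    rw [← Matrix.transpose_mul, hinv', Matrix.transpose_one]
  have h3 : ω'⁻¹ * (ω'' * ω'ᵀ) * (ω'⁻¹)ᵀ = ω'⁻¹ * (ω' * ω''ᵀ) * (ω'⁻¹)ᵀ := by rw [key]
  simp only [← Matrix.mul_assoc] at h3
  rw [hinv', one_mul, Matrix.mul_assoc (ω'⁻¹ * ω''), hTinv, mul_one] at h3
  rw [Matrix.IsSymm, Matrix.transpose_mul]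
  exact h3.symm
end
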